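/- arXiv:1903.09741 — 8 statements merged into one kernel-verified Lean document; each statement's English description precedes it below -/
import Mathlib

section
/- Generalized Davis–Kahan theorem: Let Â be an n×n real symmetric matrix with eigenvalues λ̂₁ ≥ λ̂₂ ≥ … ≥ λ̂ₙ and corresponding orthonormal eigenvectors ψ̂₁, …, ψ̂ₙ. Fix 1 ≤ l ≤ r ≤ n and set k = r − l + 1; assume g := min{λ̂_{l−1} − λ̂_l, λ̂_r − λ̂_{r+1}} > 0, with the conventions λ̂₀ = +∞ and λ̂_{n+1} = −∞. Let Λ̂ = diag(λ̂_l, …, λ̂_r), let Ψ̂ = (ψ̂_l, …, ψ̂_r) be the n×k matrix of the corresponding eigenvectors, and let Ψ̂_c be the n×(n−k) matrix of the remaining eigenvectors. Let A be any n×n real matrix (not necessarily symmetric), let Λ = diag(λ_l, …, λ_r) with λ_l ≥ … ≥ λ_r, let Ψ be any n×k real matrix, and set Δ = AΨ − ΨΛ. Then ‖Ψ̂_cᵀΨ‖_F ≤ (‖Δ‖_F + √k · ‖Ψ‖ · (‖Â − A‖ + ‖Λ̂ − Λ‖_max)) / g. -/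
open MeasureTheory Matrix

/-- Frobenius norm of a real matrix. -/
noncomputable def frobNorm {m n : Type*} [Fintype m] [Fintype n] (A : Matrix m n ℝ) : ℝ :=
  Real.sqrt (∑ i, ∑ j, (A i j) ^ 2)

/-- ℓ2 operator norm (largest singular value) of a real matrix. -/
noncomputable def opNorm {m n : Type*} [Fintype m] [Fintype n] [DecidableEq n]
    (A : Matrix m n ℝ) : ℝ :=
  ‖LinearMap.toContinuousLinearMap (Matrix.toEuclideanLin A)‖

/-- Entrywise maximum absolute value of a real matrix. -/
noncomputable def maxNorm {m n : Type*} [Fintype m] [Fintype n] (A : Matrix m n ℝ) : ℝ :=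
  ⨆ i, ⨆ j, |A i j|

/-- Smallest eigenvalue of a real symmetric matrix, via the Rayleigh quotient
(infimum of the quadratic form over the unit sphere). -/
noncomputable def lambdaMin {n : Type*} [Fintype n] (A : Matrix n n ℝ) : ℝ :=
  ⨅ x : {x : n → ℝ // ∑ i, x i ^ 2 = 1}, ∑ i, ∑ j, x.1 i * A i j * x.1 j

/-- Largest eigenvalue of a real symmetric matrix, via the Rayleigh quotient
(supremum of the quadratic form over the unit sphere). -/
noncomputable def lambdaMax {n : Type*} [Fintype n] (A : Matrix n n ℝ) : ℝ :=
  ⨆ x : {x : n → ℝ // ∑ i, x i ^ 2 = 1}, ∑ i, ∑ j, x.1 i * A i j * x.1 j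

/-- Submatrix of `U` assembling the columns indexed by the finite set `ξ`. -/
def colSub {n p : ℕ} (U : Matrix (Fin n) (Fin p) ℝ) (ξ : Finset (Fin p)) :
    Matrix (Fin n) {j : Fin p // j ∈ ξ} ℝ :=
  Matrix.of fun i j => U i j.1

/-!
Rotating by the eigenbasis `Q` of `Â` turns `ÂΨ - ΨΛ̂` into the Sylvester expression
`D̂P - PΛ̂` with `P = QᵀΨ` and `D̂ = diag(λ̂)`, whose `(i, j)` entry is `(λ̂ᵢ - λ̂_{l-1+j}) Pᵢⱼ`.
On the rows `i` outside the window `l, …, r` the spectral gap makes this factor at least `g` in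
absolute value, and these rows of `P` form `Ψ̂_cᵀΨ`; since `Qᵀ` preserves the Frobenius norm,
`g ‖Ψ̂_cᵀΨ‖_F ≤ ‖ÂΨ - ΨΛ̂‖_F`. Finally `ÂΨ - ΨΛ̂ = Δ + (Â - A)Ψ - Ψ(Λ̂ - Λ)`, and
`‖Ψ‖_F ≤ √k ‖Ψ‖` bounds both perturbation terms.
-/

section FrobeniusNorm

variable {m n p : Type*} [Fintype m] [Fintype n] [Fintype p]

lemma frobNorm_nonneg (A : Matrix m n ℝ) : 0 ≤ frobNorm A := Real.sqrt_nonneg _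

lemma sq_frobNorm (A : Matrix m n ℝ) : frobNorm A ^ 2 = ∑ i, ∑ j, A i j ^ 2 :=
  Real.sq_sqrt (by positivity)

lemma frobNorm_le_iff_sq_le {A : Matrix m n ℝ} {c : ℝ} (hc : 0 ≤ c) :
    frobNorm A ≤ c ↔ frobNorm A ^ 2 ≤ c ^ 2 :=
  (sq_le_sq₀ (frobNorm_nonneg A) hc).symm

lemma sq_frobNorm_eq_trace (A : Matrix m n ℝ) : frobNorm A ^ 2 = trace (Aᵀ * A) := by
  rw [sq_frobNorm, Finset.sum_comm]
  simp [trace, mul_apply, sq]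

lemma frobNorm_orthogonal_mul [DecidableEq m] {U : Matrix p m ℝ} (hU : Uᵀ * U = 1)
    (X : Matrix m n ℝ) :
    frobNorm (U * X) = frobNorm X := by
  refine (sq_eq_sq₀ (frobNorm_nonneg _) (frobNorm_nonneg _)).mp ?_
  rw [sq_frobNorm_eq_trace, sq_frobNorm_eq_trace, transpose_mul, Matrix.mul_assoc,
    ← Matrix.mul_assoc Uᵀ, hU, Matrix.one_mul]

attribute [local instance] Matrix.frobeniusNormedAddCommGroup in
lemma frobNorm_eq_norm (A : Matrix m n ℝ) : frobNorm A = ‖A‖ := by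
  rw [frobenius_norm_def, frobNorm, Real.sqrt_eq_rpow]
  simp [sq_abs]

attribute [local instance] Matrix.frobeniusNormedAddCommGroup in
lemma frobNorm_add_le (A B : Matrix m n ℝ) : frobNorm (A + B) ≤ frobNorm A + frobNorm B := by
  simpa only [frobNorm_eq_norm] using norm_add_le A B

attribute [local instance] Matrix.frobeniusNormedAddCommGroup in
lemma frobNorm_sub_le (A B : Matrix m n ℝ) :
    frobNorm (A - B) ≤ frobNorm A + frobNorm B := by
  simpa only [frobNorm_eq_norm] using norm_sub_le A B

lemma frobNorm_submatrix_le (A : Matrix m n ℝ) (q : m → Prop) [DecidablePred q] :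
    frobNorm (A.submatrix (Subtype.val : {i // q i} → m) id) ≤ frobNorm A := by
  rw [frobNorm_le_iff_sq_le (frobNorm_nonneg A), sq_frobNorm, sq_frobNorm,
    ← Fintype.sum_subtype_add_sum_subtype q]
  exact le_add_of_nonneg_right (by positivity)

lemma mul_frobNorm_le_of_mul_abs_le {A B : Matrix m n ℝ}
    {c : ℝ} (hc : 0 ≤ c) (h : ∀ i j, c * |A i j| ≤ |B i j|) : c * frobNorm A ≤ frobNorm B := by
  rw [← sq_le_sq₀ (mul_nonneg hc (frobNorm_nonneg A)) (frobNorm_nonneg B), mul_pow,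
    sq_frobNorm, sq_frobNorm, Finset.mul_sum]
  refine Finset.sum_le_sum fun i _ => ?_
  rw [Finset.mul_sum]
  refine Finset.sum_le_sum fun j _ => ?_
  simpa [mul_pow] using pow_le_pow_left₀ (by positivity) (h i j) 2

end FrobeniusNorm

section OperatorNorm

variable {m n : Type*} [Fintype m] [Fintype n] [DecidableEq n]

lemma opNorm_nonneg (A : Matrix m n ℝ) : 0 ≤ opNorm A := norm_nonneg _

open scoped Matrix.Norms.L2Operator in
lemma sum_sq_mulVec_le (A : Matrix m n ℝ) (v : n → ℝ) :
    ∑ i, (A *ᵥ v) i ^ 2 ≤ opNorm A ^ 2 * ∑ j, v j ^ 2 := by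
  have h := pow_le_pow_left₀ (norm_nonneg _) (A.l2_opNorm_mulVec (WithLp.toLp 2 v)) 2
  rwa [mul_pow, EuclideanSpace.real_norm_sq_eq, EuclideanSpace.real_norm_sq_eq] at h

lemma sum_sq_col_le (A : Matrix m n ℝ) (j : n) : ∑ i, A i j ^ 2 ≤ opNorm A ^ 2 := by
  simpa [mulVec_single_one, Pi.single_apply] using sum_sq_mulVec_le A (Pi.single j 1)

lemma frobNorm_le_sqrt_card_mul_opNorm (A : Matrix m n ℝ) :
    frobNorm A ≤ √(Fintype.card n) * opNorm A := by
  rw [frobNorm_le_iff_sq_le (mul_nonneg (Real.sqrt_nonneg _) (opNorm_nonneg A)), sq_frobNorm,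
    Finset.sum_comm, mul_pow, Real.sq_sqrt (Nat.cast_nonneg _)]
  simpa using Finset.sum_le_sum fun j (_ : j ∈ Finset.univ) => sum_sq_col_le A j

lemma frobNorm_mul_le {p : Type*} [Fintype p] (A : Matrix m n ℝ) (B : Matrix n p ℝ) :
    frobNorm (A * B) ≤ opNorm A * frobNorm B := by
  rw [frobNorm_le_iff_sq_le (mul_nonneg (opNorm_nonneg A) (frobNorm_nonneg B)), mul_pow,
    sq_frobNorm, sq_frobNorm, Finset.sum_comm, Finset.sum_comm (γ := n), Finset.mul_sum]
  exact Finset.sum_le_sum fun k _ => sum_sq_mulVec_le A (fun j => B j k)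

end OperatorNorm

section MaxNorm

variable {m n : Type*} [Fintype m] [Fintype n]

lemma abs_le_maxNorm (A : Matrix m n ℝ) (i : m) (j : n) : |A i j| ≤ maxNorm A :=
  (le_ciSup (Set.finite_range _).bddAbove j).trans
    (le_ciSup (f := fun i => ⨆ j, |A i j|) (Set.finite_range _).bddAbove i)

lemma maxNorm_nonneg (A : Matrix m n ℝ) : 0 ≤ maxNorm A :=
  Real.iSup_nonneg fun _ => Real.iSup_nonneg fun _ => abs_nonneg _

lemma frobNorm_mul_diagonal_le [DecidableEq n] (A : Matrix m n ℝ) (d : n → ℝ) :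
    frobNorm (A * diagonal d) ≤ frobNorm A * maxNorm (diagonal d) := by
  rw [frobNorm_le_iff_sq_le (mul_nonneg (frobNorm_nonneg A) (maxNorm_nonneg _)),
    mul_pow, sq_frobNorm, sq_frobNorm, Finset.sum_mul]
  refine Finset.sum_le_sum fun i _ => ?_
  rw [Finset.sum_mul]
  refine Finset.sum_le_sum fun j _ => ?_
  have hd : |d j| ≤ maxNorm (diagonal d) := by simpa using abs_le_maxNorm (diagonal d) j j
  rw [mul_diagonal, mul_pow]
  exact mul_le_mul_of_nonneg_left (sq_le_sq' (abs_le.mp hd).1 (abs_le.mp hd).2) (sq_nonneg _)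

end MaxNorm

lemma sylvester_apply {m n : Type*} [Fintype m] [Fintype n] [DecidableEq m] [DecidableEq n]
    (d : m → ℝ) (e : n → ℝ) (X : Matrix m n ℝ) (i : m) (j : n) :
    (diagonal d * X - X * diagonal e) i j = (d i - e j) * X i j := by
  simp only [Matrix.sub_apply, diagonal_mul, mul_diagonal]
  ring

lemma mul_frobNorm_submatrix_le_frobNorm_sylvester {m n : Type*} [Fintype m] [Fintype n]
    [DecidableEq m] [DecidableEq n] (d : m → ℝ) (e : n → ℝ) (X : Matrix m n ℝ) (q : m → Prop)
    [DecidablePred q] {g : ℝ} (hg : 0 ≤ g) (hgap : ∀ i, q i → ∀ j, g ≤ |d i - e j|) :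
    g * frobNorm (X.submatrix (Subtype.val : {i // q i} → m) id) ≤
      frobNorm (diagonal d * X - X * diagonal e) := by
  refine (mul_frobNorm_le_of_mul_abs_le hg fun i j => ?_).trans (frobNorm_submatrix_le _ q)
  rw [submatrix_apply, submatrix_apply, sylvester_apply, abs_mul]
  exact mul_le_mul_of_nonneg_right (hgap i.1 i.2 j) (abs_nonneg _)

lemma frobNorm_residual_le {m n : Type*} [Fintype m] [Fintype n] [DecidableEq m] [DecidableEq n]
    (B A : Matrix m m ℝ) (Ψ : Matrix m n ℝ) (μ ν : n → ℝ) :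
    frobNorm (B * Ψ - Ψ * diagonal μ) ≤ frobNorm (A * Ψ - Ψ * diagonal ν) +
      √(Fintype.card n) * opNorm Ψ * (opNorm (B - A) + maxNorm (diagonal μ - diagonal ν)) := by
  have hsplit : B * Ψ - Ψ * diagonal μ =
      (A * Ψ - Ψ * diagonal ν + (B - A) * Ψ) - Ψ * (diagonal μ - diagonal ν) := by
    rw [Matrix.sub_mul, Matrix.mul_sub]
    abel
  have hΨ := frobNorm_le_sqrt_card_mul_opNorm Ψ
  have hBA := (frobNorm_mul_le (B - A) Ψ).trans (mul_le_mul_of_nonneg_left hΨ (opNorm_nonneg _))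
  have hμν := (frobNorm_mul_diagonal_le Ψ (fun j => μ j - ν j)).trans
    (mul_le_mul_of_nonneg_right hΨ (maxNorm_nonneg _))
  rw [← diagonal_sub] at hμν
  rw [hsplit]
  linarith [frobNorm_add_le (A * Ψ - Ψ * diagonal ν) ((B - A) * Ψ),
    frobNorm_sub_le (A * Ψ - Ψ * diagonal ν + (B - A) * Ψ) (Ψ * (diagonal μ - diagonal ν))]

lemma le_abs_sub_of_spectral_gap {n l r : ℕ} (hlr : l ≤ r) (hrn : r ≤ n) {d : Fin n → ℝ}
    (hd : Antitone d) {g : ℝ}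
    (hgl : ∀ h : 1 < l, g ≤ d ⟨l - 2, by omega⟩ - d ⟨l - 1, by omega⟩)
    (hgr : ∀ h : r < n, g ≤ d ⟨r - 1, by omega⟩ - d ⟨r, h⟩) {i j : Fin n}
    (hi : (i : ℕ) + 1 < l ∨ r < (i : ℕ) + 1) (hj : l ≤ (j : ℕ) + 1 ∧ (j : ℕ) + 1 ≤ r) :
    g ≤ |d i - d j| := by
  rcases hi with hi | hi
  · have h₁ := hd (show i ≤ ⟨l - 2, by omega⟩ from Fin.le_def.mpr (by dsimp only; omega))
    have h₂ := hd (show (⟨l - 1, by omega⟩ : Fin n) ≤ j from Fin.le_def.mpr (by dsimp only; omega))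
    exact le_abs.mpr (Or.inl (by linarith [hgl (by omega)]))
  · have h₁ := hd (show (⟨r, by omega⟩ : Fin n) ≤ i from Fin.le_def.mpr (by dsimp only; omega))
    have h₂ := hd (show j ≤ ⟨r - 1, by omega⟩ from Fin.le_def.mpr (by dsimp only; omega))
    exact le_abs.mpr (Or.inr (by linarith [hgr (by omega)]))

/-- Indices are 0-based: the paper's `λ̂ᵢ` is `lamHat (i - 1)`, and the vacuous cases of `hgl`
and `hgr` encode the conventions `λ̂₀ = +∞`, `λ̂ₙ₊₁ = -∞`. -/
theorem generalized_davis_kahan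
    (n : ℕ) (l r : ℕ) (hl : 1 ≤ l) (hlr : l ≤ r) (hrn : r ≤ n)
    (k : ℕ) (hk : k = r - l + 1)
    (Ahat : Matrix (Fin n) (Fin n) ℝ) (hAhat : Ahat.IsSymm)
    (lamHat : Fin n → ℝ) (hmono : ∀ i j : Fin n, i ≤ j → lamHat j ≤ lamHat i)
    (Q : Matrix (Fin n) (Fin n) ℝ) (hQ : Qᵀ * Q = 1)
    (heig : Ahat * Q = Q * Matrix.diagonal lamHat)
    (g : ℝ) (hg : 0 < g)
    (hgl : ∀ h : 1 < l, g ≤ lamHat ⟨l - 2, by omega⟩ - lamHat ⟨l - 1, by omega⟩)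
    (hgr : ∀ h : r < n, g ≤ lamHat ⟨r - 1, by omega⟩ - lamHat ⟨r, h⟩)
    (A : Matrix (Fin n) (Fin n) ℝ)
    (lam : Fin k → ℝ)
    (Psi : Matrix (Fin n) (Fin k) ℝ)
    (Δ : Matrix (Fin n) (Fin k) ℝ)
    (hΔ : Δ = A * Psi - Psi * Matrix.diagonal lam) :
    frobNorm (Matrix.of fun (i : {i : Fin n // (i : ℕ) + 1 < l ∨ r < (i : ℕ) + 1})
        (j : Fin k) => ∑ m, Q m i.1 * Psi m j) ≤
      (frobNorm Δ + Real.sqrt k * opNorm Psi *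
        (opNorm (Ahat - A) +
          maxNorm (Matrix.diagonal (fun j : Fin k =>
              lamHat ⟨l - 1 + (j : ℕ), by omega⟩) - Matrix.diagonal lam))) / g := by
  set lamWin : Fin k → ℝ := fun j => lamHat ⟨l - 1 + (j : ℕ), by omega⟩
  have hQA : Qᵀ * Ahat = diagonal lamHat * Qᵀ := by
    simpa [transpose_mul, hAhat.eq] using congrArg transpose heig
  have hrotate : Qᵀ * (Ahat * Psi - Psi * diagonal lamWin) =
      diagonal lamHat * (Qᵀ * Psi) - (Qᵀ * Psi) * diagonal lamWin := by
    rw [Matrix.mul_sub, ← Matrix.mul_assoc, hQA, Matrix.mul_assoc, Matrix.mul_assoc]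
  have hgap := mul_frobNorm_submatrix_le_frobNorm_sylvester lamHat lamWin (Qᵀ * Psi) _ hg.le
    fun i hi j => le_abs_sub_of_spectral_gap hlr hrn hmono hgl hgr hi
      (j := ⟨l - 1 + (j : ℕ), by omega⟩) (by dsimp only; omega)
  rw [← hrotate, frobNorm_orthogonal_mul (by rwa [transpose_transpose, mul_eq_one_comm])] at hgap
  have hres := frobNorm_residual_le Ahat A Psi lamWin lam
  rw [Fintype.card_fin, ← hΔ] at hres
  rw [le_div_iff₀ hg, mul_comm]
  exact hgap.trans hres
end

section
/- Key Frobenius-norm inequality in the Davis–Kahan proof: Let M be an m×k real matrix, let D = diag(d₁, …, d_k) be a k×k diagonal matrix with all entries d_j ∈ [b₁, b₂], and let D_c = diag(c₁, …, c_m) be an m×m diagonal matrix each of whose entries satisfies either c_i ≤ b₁ − g or c_i ≥ b₂ + g, for some g > 0. Then ‖MD − D_cM‖_F ≥ g · ‖M‖_F. -/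
open MeasureTheory Matrix

/-- key Frobenius-norm inequality in the Davis–Kahan proof.
For an `m × k` matrix `M`, a diagonal `D = diag(d)` with entries in `[b₁, b₂]` and a
diagonal `D_c = diag(c)` each of whose entries satisfies `cᵢ ≤ b₁ - g` or `cᵢ ≥ b₂ + g`
for some `g > 0`, one has `‖M D - D_c M‖_F ≥ g ‖M‖_F`. -/
theorem frobenius_diagonal_gap_inequality
    (m k : ℕ) (M : Matrix (Fin m) (Fin k) ℝ)
    (d : Fin k → ℝ) (c : Fin m → ℝ) (b₁ b₂ g : ℝ) (hg : 0 < g)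
    (hd : ∀ j, d j ∈ Set.Icc b₁ b₂)
    (hc : ∀ i, c i ≤ b₁ - g ∨ b₂ + g ≤ c i) :
    g * frobNorm M ≤ frobNorm (M * Matrix.diagonal d - Matrix.diagonal c * M) := by
  have hentry : ∀ i j, (M * Matrix.diagonal d - Matrix.diagonal c * M) i j
      = (d j - c i) * M i j := by
    intro i j
    simp [Matrix.sub_apply, Matrix.mul_diagonal, Matrix.diagonal_mul]
    ring
  have hsq : ∀ i j, g ^ 2 * (M i j) ^ 2
      ≤ ((M * Matrix.diagonal d - Matrix.diagonal c * M) i j) ^ 2 := by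
    intro i j
    rw [hentry, mul_pow]
    have hdj := hd j
    have : g ≤ |d j - c i| := by
      rcases hc i with h | h
      · rw [abs_of_nonneg (by linarith [hdj.1])]; linarith [hdj.1]
      · rw [abs_of_nonpos (by linarith [hdj.2])]; linarith [hdj.2]
    have h2 : g ^ 2 ≤ (d j - c i) ^ 2 := by
      calc g ^ 2 ≤ |d j - c i| ^ 2 := by
            apply pow_le_pow_left₀ hg.le this
        _ = (d j - c i) ^ 2 := sq_abs _
    exact mul_le_mul_of_nonneg_right h2 (sq_nonneg _)
  unfold frobNorm
  rw [show g * Real.sqrt (∑ i, ∑ j, M i j ^ 2)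
      = Real.sqrt (g ^ 2 * ∑ i, ∑ j, M i j ^ 2) by
    rw [Real.sqrt_mul (sq_nonneg g), Real.sqrt_sq hg.le]]
  apply Real.sqrt_le_sqrt
  rw [Finset.mul_sum]
  apply Finset.sum_le_sum
  intro i _
  rw [Finset.mul_sum]
  exact Finset.sum_le_sum fun j _ => hsq i j
end

section
/- Deterministic norm decomposition for the factor model: Let F be an n×k real matrix, B a p×k real matrix, U an n×p real matrix, Σ a p×p real symmetric matrix, and set X = FBᵀ + U. Then ‖XᵀX/n − BBᵀ‖ ≤ k·‖BᵀB‖·‖FᵀF/n − I_k‖_max + 2·√(pk·‖BᵀB‖)·‖FᵀU/n‖_max + p·‖UᵀU/n − Σ‖_max + ‖Σ‖. -/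
open MeasureTheory Matrix

section FMDHelpers
open scoped Matrix.Norms.L2Operator

lemma FMD_opNorm_eq {m n : Type*} [Fintype m] [Fintype n] [DecidableEq n]
    (A : Matrix m n ℝ) : opNorm A = ‖A‖ := rfl

lemma FMD_maxNorm_nonneg {m n : Type*} [Fintype m] [Fintype n] (A : Matrix m n ℝ) :
    0 ≤ maxNorm A :=
  Real.iSup_nonneg fun _ => Real.iSup_nonneg fun _ => abs_nonneg _

lemma FMD_abs_le_maxNorm {m n : Type*} [Fintype m] [Fintype n] (A : Matrix m n ℝ)
    (i : m) (j : n) : |A i j| ≤ maxNorm A := by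
  have h1 : |A i j| ≤ ⨆ j, |A i j| :=
    le_ciSup (f := fun j => |A i j|) (Set.Finite.bddAbove (Set.finite_range _)) j
  exact h1.trans
    (le_ciSup (f := fun i => ⨆ j, |A i j|) (Set.Finite.bddAbove (Set.finite_range _)) i)

lemma FMD_norm_transpose {m n : Type*} [Fintype m] [Fintype n] [DecidableEq m] [DecidableEq n]
    (A : Matrix m n ℝ) : ‖Aᵀ‖ = ‖A‖ := by
  have h : Aᵀ = Aᴴ := by ext i j; simp [Matrix.conjTranspose_apply]
  rw [h, Matrix.l2_opNorm_conjTranspose]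

lemma FMD_norm_transpose_mul_self {m n : Type*} [Fintype m] [Fintype n] [DecidableEq m]
    [DecidableEq n] (A : Matrix m n ℝ) : ‖Aᵀ * A‖ = ‖A‖ * ‖A‖ := by
  have h : Aᵀ = Aᴴ := by ext i j; simp [Matrix.conjTranspose_apply]
  rw [h, Matrix.l2_opNorm_conjTranspose_mul_self]

lemma FMD_norm_le_sqrt_mul_maxNorm (a b : ℕ) (A : Matrix (Fin a) (Fin b) ℝ) :
    ‖A‖ ≤ Real.sqrt ((a : ℝ) * b) * maxNorm A := by
  rw [Matrix.l2_opNorm_def]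
  apply ContinuousLinearMap.opNorm_le_bound
  · exact mul_nonneg (Real.sqrt_nonneg _) (FMD_maxNorm_nonneg A)
  intro x
  set M := maxNorm A with hMdef
  have hM : 0 ≤ M := FMD_maxNorm_nonneg A
  have hxn : ‖x‖ = Real.sqrt (∑ j, (x j) ^ 2) := by
    rw [EuclideanSpace.norm_eq]
    exact congrArg Real.sqrt (Finset.sum_congr rfl fun j _ => by rw [Real.norm_eq_abs, sq_abs])
  have hXn : ‖(LinearEquiv.trans (Matrix.toEuclideanLin) LinearMap.toContinuousLinearMap A) x‖
      = Real.sqrt (∑ i, (∑ j, A i j * x j) ^ 2) := by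
    have : (LinearEquiv.trans (Matrix.toEuclideanLin) LinearMap.toContinuousLinearMap A) x
        = (WithLp.equiv 2 (Fin a → ℝ)).symm (A *ᵥ (WithLp.equiv 2 (Fin b → ℝ)) x) :=
      Matrix.toEuclideanLin_apply A x
    rw [this, EuclideanSpace.norm_eq]
    refine congrArg Real.sqrt (Finset.sum_congr rfl fun i _ => ?_)
    rw [Real.norm_eq_abs, sq_abs]
    exact congrArg (· ^ 2) (by simp [Matrix.mulVec, dotProduct])
  rw [hXn, hxn]
  have key : (∑ i, (∑ j, A i j * x j) ^ 2) ≤ ((a : ℝ) * b * M ^ 2) * (∑ j, (x j) ^ 2) := by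
    calc ∑ i, (∑ j, A i j * x j) ^ 2
        ≤ ∑ i : Fin a, ((∑ j, (A i j) ^ 2) * (∑ j, (x j) ^ 2)) := by
          apply Finset.sum_le_sum
          intro i _
          exact Finset.sum_mul_sq_le_sq_mul_sq _ _ _
      _ ≤ ∑ _i : Fin a, (((b : ℝ) * M ^ 2) * (∑ j, (x j) ^ 2)) := by
          apply Finset.sum_le_sum
          intro i _
          apply mul_le_mul_of_nonneg_right _ (Finset.sum_nonneg fun j _ => sq_nonneg _)
          calc ∑ j, (A i j) ^ 2 ≤ ∑ _j : Fin b, M ^ 2 := by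
                apply Finset.sum_le_sum
                intro j _
                rw [← sq_abs]
                exact pow_le_pow_left₀ (abs_nonneg _) (FMD_abs_le_maxNorm A i j) 2
            _ = (b : ℝ) * M ^ 2 := by
                simp [Finset.sum_const, Finset.card_univ, nsmul_eq_mul]
      _ = ((a : ℝ) * b * M ^ 2) * (∑ j, (x j) ^ 2) := by
          rw [Finset.sum_const, Finset.card_univ, Fintype.card_fin, nsmul_eq_mul]; ring
  calc Real.sqrt (∑ i, (∑ j, A i j * x j) ^ 2)
      ≤ Real.sqrt (((a : ℝ) * b * M ^ 2) * (∑ j, (x j) ^ 2)) := Real.sqrt_le_sqrt key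
    _ = Real.sqrt ((a : ℝ) * b) * M * Real.sqrt (∑ j, (x j) ^ 2) := by
        rw [Real.sqrt_mul (by positivity), Real.sqrt_mul (by positivity), Real.sqrt_sq hM]

end FMDHelpers

section FMDMain
open scoped Matrix.Norms.L2Operator

/-- deterministic norm decomposition for the factor model.
With `X = F Bᵀ + U`, one has
`‖XᵀX/n - BBᵀ‖ ≤ k ‖BᵀB‖ ‖FᵀF/n - I‖_max + 2 √(p k ‖BᵀB‖) ‖FᵀU/n‖_max
  + p ‖UᵀU/n - Σ‖_max + ‖Σ‖`. -/
theorem factor_model_norm_decomposition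
    (n k p : ℕ) (hn : 0 < n)
    (F : Matrix (Fin n) (Fin k) ℝ) (B : Matrix (Fin p) (Fin k) ℝ)
    (U : Matrix (Fin n) (Fin p) ℝ)
    (S : Matrix (Fin p) (Fin p) ℝ) (hS : S.IsSymm)
    (X : Matrix (Fin n) (Fin p) ℝ) (hX : X = F * Bᵀ + U) :
    opNorm (((n : ℝ)⁻¹) • (Xᵀ * X) - B * Bᵀ) ≤
      (k : ℝ) * opNorm (Bᵀ * B) * maxNorm (((n : ℝ)⁻¹) • (Fᵀ * F) - 1) +
      2 * Real.sqrt ((p : ℝ) * k * opNorm (Bᵀ * B)) * maxNorm (((n : ℝ)⁻¹) • (Fᵀ * U)) +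
      (p : ℝ) * maxNorm (((n : ℝ)⁻¹) • (Uᵀ * U) - S) + opNorm S := by
  classical
  subst hX
  set D : Matrix (Fin k) (Fin k) ℝ := ((n : ℝ)⁻¹) • (Fᵀ * F) - 1 with hD
  set G : Matrix (Fin k) (Fin p) ℝ := ((n : ℝ)⁻¹) • (Fᵀ * U) with hG
  set W : Matrix (Fin p) (Fin p) ℝ := ((n : ℝ)⁻¹) • (Uᵀ * U) - S with hW
  have key : ((n : ℝ)⁻¹) • ((F * Bᵀ + U)ᵀ * (F * Bᵀ + U)) - B * Bᵀ
      = B * D * Bᵀ + B * G + (B * G)ᵀ + W + S := by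
    rw [hD, hG, hW]
    simp only [Matrix.transpose_add, Matrix.transpose_mul, Matrix.transpose_smul,
      Matrix.transpose_transpose, Matrix.add_mul, Matrix.mul_add, Matrix.sub_mul, Matrix.mul_sub,
      Matrix.mul_one, Matrix.one_mul, Matrix.smul_mul, Matrix.mul_smul, smul_sub, smul_add,
      Matrix.mul_assoc]
    abel
  simp only [FMD_opNorm_eq]
  rw [key]
  have tri : ‖B * D * Bᵀ + B * G + (B * G)ᵀ + W + S‖
      ≤ ‖B * D * Bᵀ‖ + ‖B * G‖ + ‖(B * G)ᵀ‖ + ‖W‖ + ‖S‖ :=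
    calc ‖B * D * Bᵀ + B * G + (B * G)ᵀ + W + S‖
        ≤ ‖B * D * Bᵀ + B * G + (B * G)ᵀ + W‖ + ‖S‖ := norm_add_le _ _
      _ ≤ (‖B * D * Bᵀ + B * G + (B * G)ᵀ‖ + ‖W‖) + ‖S‖ := by
          gcongr; exact norm_add_le _ _
      _ ≤ ((‖B * D * Bᵀ + B * G‖ + ‖(B * G)ᵀ‖) + ‖W‖) + ‖S‖ := by
          gcongr; exact norm_add_le _ _
      _ ≤ (((‖B * D * Bᵀ‖ + ‖B * G‖) + ‖(B * G)ᵀ‖) + ‖W‖) + ‖S‖ := by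
          gcongr; exact norm_add_le _ _
      _ = _ := by ring
  have hBB : ‖B‖ * ‖B‖ = ‖Bᵀ * B‖ := (FMD_norm_transpose_mul_self B).symm
  have hBBnn : (0 : ℝ) ≤ ‖Bᵀ * B‖ := norm_nonneg _
  have hBsqrt : ‖B‖ = Real.sqrt ‖Bᵀ * B‖ := by
    rw [← hBB, Real.sqrt_mul_self (norm_nonneg B)]
  have h1 : ‖B * D * Bᵀ‖ ≤ (k : ℝ) * ‖Bᵀ * B‖ * maxNorm D := by
    calc ‖B * D * Bᵀ‖ ≤ ‖B * D‖ * ‖Bᵀ‖ := Matrix.l2_opNorm_mul _ _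
      _ ≤ (‖B‖ * ‖D‖) * ‖Bᵀ‖ :=
          mul_le_mul_of_nonneg_right (Matrix.l2_opNorm_mul _ _) (norm_nonneg _)
      _ = ‖B‖ * ‖B‖ * ‖D‖ := by rw [FMD_norm_transpose]; ring
      _ ≤ ‖Bᵀ * B‖ * (Real.sqrt ((k : ℝ) * k) * maxNorm D) := by
          rw [hBB]
          exact mul_le_mul_of_nonneg_left (FMD_norm_le_sqrt_mul_maxNorm k k D) hBBnn
      _ = (k : ℝ) * ‖Bᵀ * B‖ * maxNorm D := by
          rw [Real.sqrt_mul_self (Nat.cast_nonneg k)]; ring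
  have hsq : Real.sqrt ((p : ℝ) * k * ‖Bᵀ * B‖) = ‖B‖ * Real.sqrt ((k : ℝ) * p) := by
    rw [hBsqrt, show (p : ℝ) * k * ‖Bᵀ * B‖ = ((k : ℝ) * p) * ‖Bᵀ * B‖ by ring,
      Real.sqrt_mul (by positivity)]
    ring
  have h2 : ‖B * G‖ ≤ Real.sqrt ((p : ℝ) * k * ‖Bᵀ * B‖) * maxNorm G := by
    calc ‖B * G‖ ≤ ‖B‖ * ‖G‖ := Matrix.l2_opNorm_mul _ _
      _ ≤ ‖B‖ * (Real.sqrt ((k : ℝ) * p) * maxNorm G) :=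
          mul_le_mul_of_nonneg_left (FMD_norm_le_sqrt_mul_maxNorm k p G) (norm_nonneg _)
      _ = Real.sqrt ((p : ℝ) * k * ‖Bᵀ * B‖) * maxNorm G := by rw [hsq]; ring
  have h3 : ‖(B * G)ᵀ‖ ≤ Real.sqrt ((p : ℝ) * k * ‖Bᵀ * B‖) * maxNorm G := by
    rw [FMD_norm_transpose]; exact h2
  have h4 : ‖W‖ ≤ (p : ℝ) * maxNorm W := by
    have h := FMD_norm_le_sqrt_mul_maxNorm p p W
    rwa [Real.sqrt_mul_self (Nat.cast_nonneg p)] at h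
  linarith [tri, h1, h2, h3, h4]

end FMDMain
end

section
/- Chi-squared upper tail bound (Lemma A4(a), upper part): Let n and d be positive integers with d < n, let Z be a random variable distributed as chi-squared with n − d degrees of freedom, and let ε > 0 satisfy nε > d. Then P(Z/n ≥ 1 + ε) ≤ exp(−min{(nε + d)²/(8(n − d)), (nε + d)/8}). -/
/-!
Chernoff's method. For `X ~ Gamma(a, r)` and `0 ≤ s < r`, tilting the density by `exp (s x)`
gives `P(X ≥ x₀) ≤ (r / (r - s)) ^ a * exp (-s x₀)`. For the chi-squared law with `k` degrees of
freedom and `s ≤ 1/4`, the bound `(1 - u)⁻¹ ≤ exp (u + u²)` on `[0, 1/2]` turns this into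
`P(X ≥ k + t) ≤ exp (-s t + 2 k s²)`, and `s = min (t / (4k)) (1/4)` yields the claim.
-/

open MeasureTheory Matrix

open ProbabilityTheory Set Real

lemma Real.inv_one_sub_le_exp {u : ℝ} (hu₀ : 0 ≤ u) (hu : u ≤ 1 / 2) :
    (1 - u)⁻¹ ≤ exp (u + u ^ 2) := by
  have hquad := quadratic_le_exp_of_nonneg (x := u + u ^ 2) (by positivity)
  rw [inv_le_iff_one_le_mul₀' (by linarith)]
  nlinarith

lemma exists_chernoff_exponent_le {k t : ℝ} (hk : 0 < k) (ht : 0 ≤ t) :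
    ∃ s, 0 ≤ s ∧ s ≤ 1 / 4 ∧
      k * (s + 2 * s ^ 2) - s * (k + t) ≤ -min (t ^ 2 / (8 * k)) (t / 8) := by
  rcases le_total t k with htk | hkt
  · refine ⟨t / (4 * k), by positivity, by rw [div_le_iff₀ (by positivity)]; linarith, ?_⟩
    have hopt : k * (t / (4 * k) + 2 * (t / (4 * k)) ^ 2) - t / (4 * k) * (k + t) =
        -(t ^ 2 / (8 * k)) := by
      field_simp
      ring
    rw [hopt]
    exact neg_le_neg (min_le_left _ _)
  · refine ⟨1 / 4, by norm_num, le_rfl, ?_⟩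
    have := min_le_right (t ^ 2 / (8 * k)) (t / 8)
    linarith

namespace ProbabilityTheory

lemma gammaPDFReal_eq_mul_exp_mul_gammaPDFReal_sub (a : ℝ) {r s : ℝ} (hs : 0 ≤ s) (hsr : s < r)
    (x : ℝ) :
    gammaPDFReal a r x =
      (r / (r - s)) ^ a * exp (-(s * x)) * gammaPDFReal a (r - s) x := by
  have hrs : 0 < r - s := sub_pos.mpr hsr
  unfold gammaPDFReal
  split_ifs
  · have hexp : exp (-(r * x)) = exp (-(s * x)) * exp (-((r - s) * x)) := by
      rw [← exp_add]
      ring_nf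
    rw [div_rpow (hs.trans hsr.le) hrs.le, hexp]
    field_simp [(rpow_pos_of_pos hrs a).ne']
  · simp

/-- `(r / (r - s)) ^ a` is the moment generating function of `Gamma(a, r)` at `s`. -/
theorem gammaMeasure_Ici_le {a r s : ℝ} (ha : 0 < a) (hs : 0 ≤ s) (hsr : s < r) (x₀ : ℝ) :
    gammaMeasure a r (Ici x₀) ≤ ENNReal.ofReal ((r / (r - s)) ^ a * exp (-(s * x₀))) := by
  have hrs : 0 < r - s := sub_pos.mpr hsr
  set C := (r / (r - s)) ^ a * exp (-(s * x₀))
  have hbase : 0 ≤ r / (r - s) := div_nonneg (hs.trans hsr.le) hrs.le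
  have hpdf : ∀ x ∈ Ici x₀, gammaPDF a r x ≤ ENNReal.ofReal C * gammaPDF a (r - s) x := by
    intro x hx
    rw [gammaPDF, gammaPDF, ← ENNReal.ofReal_mul (by positivity),
      gammaPDFReal_eq_mul_exp_mul_gammaPDFReal_sub a hs hsr x]
    refine ENNReal.ofReal_le_ofReal (mul_le_mul_of_nonneg_right ?_ (gammaPDFReal_nonneg ha hrs x))
    exact mul_le_mul_of_nonneg_left (exp_le_exp.mpr (by nlinarith [mem_Ici.mp hx]))
      (by positivity)
  have hmeas : Measurable (gammaPDF a (r - s)) := (measurable_gammaPDFReal _ _).ennreal_ofReal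
  rw [gammaMeasure, withDensity_apply _ measurableSet_Ici]
  calc ∫⁻ x in Ici x₀, gammaPDF a r x
      ≤ ∫⁻ x in Ici x₀, ENNReal.ofReal C * gammaPDF a (r - s) x :=
        setLIntegral_mono (hmeas.const_mul _) hpdf
    _ ≤ ∫⁻ x, ENNReal.ofReal C * gammaPDF a (r - s) x := setLIntegral_le_lintegral _ _
    _ = ENNReal.ofReal C := by
        rw [lintegral_const_mul _ hmeas, lintegral_gammaPDF_eq_one ha hrs, mul_one]

theorem gammaMeasure_half_Ici_le {k s : ℝ} (hk : 0 < k) (hs : 0 ≤ s) (hs4 : s ≤ 1 / 4)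
    (x₀ : ℝ) :
    gammaMeasure (k / 2) (1 / 2) (Ici x₀) ≤
      ENNReal.ofReal (exp (k * (s + 2 * s ^ 2) - s * x₀)) := by
  refine (gammaMeasure_Ici_le (by positivity) hs (by linarith) x₀).trans
    (ENNReal.ofReal_le_ofReal ?_)
  have hbase : (1 / 2) / (1 / 2 - s) = (1 - 2 * s)⁻¹ := by
    field_simp
  have hmgf : ((1 - 2 * s)⁻¹) ^ (k / 2) ≤ exp (2 * s + (2 * s) ^ 2) ^ (k / 2) :=
    rpow_le_rpow (inv_nonneg.mpr (by linarith)) (inv_one_sub_le_exp (by linarith) (by linarith))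
      (by positivity)
  calc (1 / 2 / (1 / 2 - s)) ^ (k / 2) * exp (-(s * x₀))
      ≤ exp (2 * s + (2 * s) ^ 2) ^ (k / 2) * exp (-(s * x₀)) := by
        rw [hbase]
        gcongr
    _ = exp (k * (s + 2 * s ^ 2) - s * x₀) := by
        rw [← exp_mul, ← exp_add]
        ring_nf

theorem gammaMeasure_half_Ici_add_le {k t : ℝ} (hk : 0 < k) (ht : 0 ≤ t) :
    gammaMeasure (k / 2) (1 / 2) (Ici (k + t)) ≤
      ENNReal.ofReal (exp (-min (t ^ 2 / (8 * k)) (t / 8))) := by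
  obtain ⟨s, hs, hs4, hexponent⟩ := exists_chernoff_exponent_le hk ht
  exact (gammaMeasure_half_Ici_le hk hs hs4 _).trans
    (ENNReal.ofReal_le_ofReal (exp_le_exp.mpr hexponent))

end ProbabilityTheory

theorem chi_squared_upper_tail_general
    {Ω : Type*} [MeasureSpace Ω]
    (n d : ℕ) (hdn : d < n)
    (Z : Ω → ℝ)
    (hZ : Measure.map Z volume = ProbabilityTheory.gammaMeasure (((n : ℝ) - d) / 2) (1 / 2))
    (ε : ℝ) (hε : 0 < ε) :
    volume {ω | 1 + ε ≤ Z ω / n} ≤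
      ENNReal.ofReal (Real.exp (-(min (((n : ℝ) * ε + d) ^ 2 / (8 * ((n : ℝ) - d)))
        (((n : ℝ) * ε + d) / 8)))) := by
  have hn : (0 : ℝ) < n := by exact_mod_cast (Nat.zero_le d).trans_lt hdn
  have hk : (0 : ℝ) < n - d := sub_pos.mpr (by exact_mod_cast hdn)
  have := isProbabilityMeasure_gammaMeasure (half_pos hk) one_half_pos
  have hZm : AEMeasurable Z volume :=
    .of_map_ne_zero (by rw [hZ]; exact IsProbabilityMeasure.ne_zero _)
  have hset : {ω | 1 + ε ≤ Z ω / n} = Z ⁻¹' Ici ((n - d) + (n * ε + d)) := by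
    ext ω
    change 1 + ε ≤ Z ω / n ↔ (n - d) + (n * ε + d) ≤ Z ω
    rw [le_div_iff₀ hn]
    ring_nf
  rw [hset, ← Measure.map_apply_of_aemeasurable hZm measurableSet_Ici, hZ]
  exact gammaMeasure_half_Ici_add_le hk (by positivity)

/-- chi-squared upper tail bound, Lemma A4(a), upper part.
Here the chi-squared distribution with `n - d` degrees of freedom is the Gamma
distribution with shape `(n-d)/2` and rate `1/2`.  If `nε > d` then
`P(Z/n ≥ 1 + ε) ≤ exp(-min{(nε + d)²/(8(n-d)), (nε + d)/8})`. -/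
theorem chi_squared_upper_tail
    {Ω : Type*} [MeasureSpace Ω] [IsProbabilityMeasure (volume : Measure Ω)]
    (n d : ℕ) (hd : 0 < d) (hdn : d < n)
    (Z : Ω → ℝ)
    (hZ : Measure.map Z volume = ProbabilityTheory.gammaMeasure (((n : ℝ) - d) / 2) (1 / 2))
    (ε : ℝ) (hε : 0 < ε) (h : (d : ℝ) < n * ε) :
    volume {ω | 1 + ε ≤ Z ω / n} ≤
      ENNReal.ofReal (Real.exp (-(min (((n : ℝ) * ε + d) ^ 2 / (8 * ((n : ℝ) - d)))
        (((n : ℝ) * ε + d) / 8)))) :=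
  chi_squared_upper_tail_general n d hdn Z hZ ε hε
end

section
/- Chi-squared lower tail bound (Lemma A4(a), lower part): Let n and d be positive integers with d < n, let Z be a random variable distributed as chi-squared with n − d degrees of freedom, and let ε > 0 satisfy nε > d. Then P(Z/n ≤ 1 − ε) ≤ exp(−min{(nε − d)²/(8(n − d)), (nε − d)/8}). -/
open MeasureTheory Matrix

/-! Chernoff bound: for `X ~ Gamma(a, r)` and `t ≥ 0`,
`P(X ≤ c) ≤ e^{tc} E[e^{-tX}] = e^{tc} (r / (r + t))^a`, the Laplace transform coming from
exponential tilting of the density. For the chi-squared law (`a = m / 2`, `r = 1 / 2`) at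
`c = m - A` with `m = n - d`, `A = nε - d`, the tilt `t = A / (4 (m - A))` together with
`q ≤ exp (q - 1)` gives `exp (-A² / (4 (2m - A))) ≤ exp (-A² / (8m))`. -/

open Real Set ProbabilityTheory

namespace ProbabilityTheory

lemma exp_neg_mul_mul_gammaPDFReal {a r t : ℝ} (hr : 0 ≤ r) (hrt : 0 < r + t) (x : ℝ) :
    exp (-(t * x)) * gammaPDFReal a r x = (r / (r + t)) ^ a * gammaPDFReal a (r + t) x := by
  unfold gammaPDFReal
  split_ifs
  · have hexp : exp (-(t * x)) * exp (-(r * x)) = exp (-((r + t) * x)) := by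
      rw [← exp_add]; ring_nf
    rw [div_rpow hr hrt.le, ← hexp]
    field_simp [(rpow_pos_of_pos hrt a).ne']
  · simp

lemma lintegral_exp_neg_mul_mul_gammaPDF {a r t : ℝ} (ha : 0 < a) (hr : 0 ≤ r) (hrt : 0 < r + t) :
    ∫⁻ x, ENNReal.ofReal (exp (-(t * x))) * gammaPDF a r x
      = ENNReal.ofReal ((r / (r + t)) ^ a) := by
  have htilt (x : ℝ) : ENNReal.ofReal (exp (-(t * x))) * gammaPDF a r x
      = ENNReal.ofReal ((r / (r + t)) ^ a) * gammaPDF a (r + t) x := by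
    simp only [gammaPDF, ← ENNReal.ofReal_mul (exp_nonneg _),
      ← ENNReal.ofReal_mul (rpow_nonneg (div_nonneg hr hrt.le) _),
      exp_neg_mul_mul_gammaPDFReal hr hrt]
  simp_rw [htilt]
  rw [lintegral_const_mul' _ _ ENNReal.ofReal_ne_top, lintegral_gammaPDF_eq_one ha hrt, mul_one]

lemma gammaMeasure_Iic_le {a r t : ℝ} (ha : 0 < a) (hr : 0 < r) (ht : 0 ≤ t) (c : ℝ) :
    gammaMeasure a r (Iic c) ≤ ENNReal.ofReal (exp (t * c) * (r / (r + t)) ^ a) := by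
  have hmeas : Measurable fun x ↦ ENNReal.ofReal (exp (t * (c - x))) * gammaPDF a r x :=
    (by fun_prop : Measurable fun x ↦ ENNReal.ofReal (exp (t * (c - x)))).mul
      (measurable_gammaPDFReal a r).ennreal_ofReal
  rw [gammaMeasure, withDensity_apply _ measurableSet_Iic]
  calc ∫⁻ x in Iic c, gammaPDF a r x
      ≤ ∫⁻ x in Iic c, ENNReal.ofReal (exp (t * (c - x))) * gammaPDF a r x := by
        refine setLIntegral_mono hmeas fun x hx ↦ le_mul_of_one_le_left bot_le ?_
        exact ENNReal.one_le_ofReal.mpr (one_le_exp (mul_nonneg ht (sub_nonneg.mpr hx)))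
    _ ≤ ∫⁻ x, ENNReal.ofReal (exp (t * (c - x))) * gammaPDF a r x :=
        setLIntegral_le_lintegral _ _
    _ = ENNReal.ofReal (exp (t * c)) *
          ∫⁻ x, ENNReal.ofReal (exp (-(t * x))) * gammaPDF a r x := by
        simp_rw [mul_sub, sub_eq_add_neg, exp_add, ENNReal.ofReal_mul (exp_nonneg _), mul_assoc]
        exact lintegral_const_mul' _ _ ENNReal.ofReal_ne_top
    _ = ENNReal.ofReal (exp (t * c) * (r / (r + t)) ^ a) := by
        rw [lintegral_exp_neg_mul_mul_gammaPDF ha hr.le (by linarith),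
          ← ENNReal.ofReal_mul (exp_nonneg _)]

lemma gammaMeasure_Iic_of_nonpos {a r c : ℝ} (hc : c ≤ 0) : gammaMeasure a r (Iic c) = 0 := by
  rw [gammaMeasure, withDensity_apply _ measurableSet_Iic,
    ← setLIntegral_congr Iio_ae_eq_Iic]
  exact lintegral_gammaPDF_of_nonpos hc

lemma exp_div_four_mul_rpow_le {m A : ℝ} (hA : 0 < A) (hAm : A < m) :
    exp (A / 4) * (2 * (m - A) / (2 * m - A)) ^ (m / 2) ≤ exp (-(A ^ 2 / (8 * m))) := by
  have h2mA : 0 < 2 * m - A := by linarith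
  have hq : 2 * (m - A) / (2 * m - A) - 1 = -(A / (2 * m - A)) := by
    field_simp
    ring
  calc exp (A / 4) * (2 * (m - A) / (2 * m - A)) ^ (m / 2)
      ≤ exp (A / 4) * exp (-(A / (2 * m - A))) ^ (m / 2) := by
        refine mul_le_mul_of_nonneg_left
          (rpow_le_rpow (div_nonneg (by linarith) h2mA.le) ?_ (by linarith)) (exp_nonneg _)
        have hlog := add_one_le_exp (2 * (m - A) / (2 * m - A) - 1)
        rw [hq] at hlog
        linarith
    _ = exp (-(A ^ 2 / (4 * (2 * m - A)))) := by
        rw [← exp_mul, ← exp_add]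
        congr 1
        field_simp
        ring
    _ ≤ exp (-(A ^ 2 / (8 * m))) :=
        exp_le_exp.mpr <| neg_le_neg <|
          div_le_div_of_nonneg_left (sq_nonneg A) (by positivity) (by linarith)

lemma gammaMeasure_half_Iic_sub_le {m A : ℝ} (hm : 0 < m) (hA : 0 < A) :
    gammaMeasure (m / 2) (1 / 2) (Iic (m - A)) ≤ ENNReal.ofReal (exp (-(A ^ 2 / (8 * m)))) := by
  rcases le_or_gt m A with hmA | hAm
  · simp [gammaMeasure_Iic_of_nonpos (sub_nonpos.mpr hmA)]
  have htilt : 0 ≤ A / (4 * (m - A)) := div_nonneg hA.le (by linarith)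
  refine (gammaMeasure_Iic_le (half_pos hm) one_half_pos htilt _).trans ?_
  gcongr
  convert exp_div_four_mul_rpow_le hA hAm using 3
  · field_simp [(by linarith : m - A ≠ 0)]
  · field_simp [(by linarith : m - A ≠ 0), (by linarith : 2 * m - A ≠ 0)]
    ring

end ProbabilityTheory

theorem chi_squared_lower_tail_general
    {Ω : Type*} [MeasureSpace Ω] [IsProbabilityMeasure (volume : Measure Ω)]
    (n d : ℕ) (hdn : d < n)
    (Z : Ω → ℝ)
    (hZ : Measure.map Z volume = ProbabilityTheory.gammaMeasure (((n : ℝ) - d) / 2) (1 / 2))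
    (ε : ℝ) (h : (d : ℝ) < n * ε) :
    volume {ω | Z ω / n ≤ 1 - ε} ≤
      ENNReal.ofReal (Real.exp (-(min (((n : ℝ) * ε - d) ^ 2 / (8 * ((n : ℝ) - d)))
        (((n : ℝ) * ε - d) / 8)))) := by
  have hdn' : (d : ℝ) < n := by exact_mod_cast hdn
  have hn : (0 : ℝ) < n := lt_of_le_of_lt d.cast_nonneg hdn'
  have hZm : AEMeasurable Z volume := aemeasurable_of_map_neZero <| by
    rw [hZ]
    exact (isProbabilityMeasure_gammaMeasure (by linarith) one_half_pos).neZero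
  have hset : {ω | Z ω / n ≤ 1 - ε} = Z ⁻¹' Iic ((n - d) - (n * ε - d)) := by
    ext ω
    simp only [mem_ofPred_eq, mem_preimage, mem_Iic, div_le_iff₀ hn]
    ring_nf
  calc volume {ω | Z ω / n ≤ 1 - ε}
      = gammaMeasure (((n : ℝ) - d) / 2) (1 / 2) (Iic ((n - d) - (n * ε - d))) := by
        rw [hset, ← Measure.map_apply_of_aemeasurable hZm measurableSet_Iic, hZ]
    _ ≤ ENNReal.ofReal (exp (-(((n : ℝ) * ε - d) ^ 2 / (8 * ((n : ℝ) - d))))) :=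
        gammaMeasure_half_Iic_sub_le (by linarith) (by linarith)
    _ ≤ _ := by
        gcongr
        exact min_le_left _ _

/-- chi-squared lower tail bound, Lemma A4(a), lower part.
Here the chi-squared distribution with `n - d` degrees of freedom is the Gamma
distribution with shape `(n-d)/2` and rate `1/2`.  If `nε > d` then
`P(Z/n ≤ 1 - ε) ≤ exp(-min{(nε - d)²/(8(n-d)), (nε - d)/8})`. -/
theorem chi_squared_lower_tail
    {Ω : Type*} [MeasureSpace Ω] [IsProbabilityMeasure (volume : Measure Ω)]
    (n d : ℕ) (hd : 0 < d) (hdn : d < n)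
    (Z : Ω → ℝ)
    (hZ : Measure.map Z volume = ProbabilityTheory.gammaMeasure (((n : ℝ) - d) / 2) (1 / 2))
    (ε : ℝ) (hε : 0 < ε) (h : (d : ℝ) < n * ε) :
    volume {ω | Z ω / n ≤ 1 - ε} ≤
      ENNReal.ofReal (Real.exp (-(min (((n : ℝ) * ε - d) ^ 2 / (8 * ((n : ℝ) - d)))
        (((n : ℝ) * ε - d) / 8)))) :=
  chi_squared_lower_tail_general n d hdn Z hZ ε h
end

section
/- Chi-squared tail bound via Laurent–Massart (Lemma A4(b), first assertion): Let d be a positive integer, let Z be a random variable distributed as chi-squared with d degrees of freedom, and let t ≥ d. Then P(Z ≥ t) ≤ exp(−(√(2t − d) − √d)²/4). -/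
open MeasureTheory Matrix

/-! Chernoff bound. Tilting the `Gamma(a, r)` density by `exp (l * x)` gives `(r / (r - l)) ^ a`
times the `Gamma(a, r - l)` density, so the moment generating function of `Gamma(a, r)` at `l < r`
is `(r / (r - l)) ^ a`. For `a = d / 2`, `r = 1 / 2` and `l = (t - d) / (2 * t)` the Chernoff bound
reads `P(Z ≥ t) ≤ exp (-(t - d) / 2) * (t / d) ^ (d / 2)`. With `p = √(2t - d)` and `q = √d` one has
`t / d = (1 + (p / q) ^ 2) / 2 ≤ exp (p / q - 1)`, and the exponents then add up to `-(p - q)² / 4`. -/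

open Real Set ProbabilityTheory

namespace ProbabilityTheory

variable {a r : ℝ}

lemma integral_gammaPDFReal_eq_one (ha : 0 < a) (hr : 0 < r) :
    ∫ x, gammaPDFReal a r x = 1 := by
  rw [integral_eq_lintegral_of_nonneg_ae (ae_of_all _ (gammaPDFReal_nonneg ha hr))
    (measurable_gammaPDFReal a r).aestronglyMeasurable]
  change (∫⁻ x, gammaPDF a r x).toReal = 1
  simp [lintegral_gammaPDF_eq_one ha hr]

lemma integrable_gammaPDFReal (ha : 0 < a) (hr : 0 < r) : Integrable (gammaPDFReal a r) :=
  .of_integral_ne_zero (by simp [integral_gammaPDFReal_eq_one ha hr])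

lemma toReal_gammaPDF (ha : 0 < a) (hr : 0 < r) (x : ℝ) :
    (gammaPDF a r x).toReal = gammaPDFReal a r x :=
  ENNReal.toReal_ofReal (gammaPDFReal_nonneg ha hr x)

lemma integrable_gammaMeasure_iff (ha : 0 < a) (hr : 0 < r) {f : ℝ → ℝ} :
    Integrable f (gammaMeasure a r) ↔ Integrable (fun x => gammaPDFReal a r x * f x) := by
  rw [gammaMeasure, integrable_withDensity_iff_integrable_smul' (f := gammaPDF a r)
    (measurable_gammaPDFReal a r).ennreal_ofReal (ae_of_all _ fun _ => ENNReal.ofReal_lt_top)]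
  simp_rw [toReal_gammaPDF ha hr, smul_eq_mul]

lemma integral_gammaMeasure (ha : 0 < a) (hr : 0 < r) (f : ℝ → ℝ) :
    ∫ x, f x ∂gammaMeasure a r = ∫ x, gammaPDFReal a r x * f x := by
  rw [gammaMeasure, integral_withDensity_eq_integral_toReal_smul (f := gammaPDF a r)
    (measurable_gammaPDFReal a r).ennreal_ofReal (ae_of_all _ fun _ => ENNReal.ofReal_lt_top)]
  simp_rw [toReal_gammaPDF ha hr, smul_eq_mul]

lemma gammaPDFReal_mul_exp {l : ℝ} (hr : 0 ≤ r) (hl : l < r) (x : ℝ) :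
    gammaPDFReal a r x * exp (l * x) = (r / (r - l)) ^ a * gammaPDFReal a (r - l) x := by
  have hrl : 0 < r - l := sub_pos.mpr hl
  unfold gammaPDFReal
  split_ifs
  · rw [div_rpow hr hrl.le, show -((r - l) * x) = l * x + -(r * x) by ring, exp_add]
    field_simp
  · simp

lemma integrable_exp_mul_gammaMeasure {l : ℝ} (ha : 0 < a) (hr : 0 < r) (hl : l < r) :
    Integrable (fun x => exp (l * x)) (gammaMeasure a r) := by
  simp_rw [integrable_gammaMeasure_iff ha hr, gammaPDFReal_mul_exp hr.le hl]
  exact (integrable_gammaPDFReal ha (sub_pos.mpr hl)).const_mul _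

lemma mgf_id_gammaMeasure {l : ℝ} (ha : 0 < a) (hr : 0 < r) (hl : l < r) :
    mgf id (gammaMeasure a r) l = (r / (r - l)) ^ a := by
  simp_rw [mgf, id, integral_gammaMeasure ha hr, gammaPDFReal_mul_exp hr.le hl, integral_const_mul,
    integral_gammaPDFReal_eq_one ha (sub_pos.mpr hl), mul_one]

end ProbabilityTheory

lemma one_add_sq_div_two_le_exp_sub_one {v : ℝ} (hv : 1 ≤ v) :
    (1 + v ^ 2) / 2 ≤ exp (v - 1) := by
  convert quadratic_le_exp_of_nonneg (sub_nonneg.mpr hv) using 1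
  ring

lemma exp_neg_sub_div_two_mul_div_rpow_le {d t : ℝ} (hd : 0 < d) (ht : d ≤ t) :
    exp (-(t - d) / 2) * (t / d) ^ (d / 2) ≤ exp (-((√(2 * t - d) - √d) ^ 2 / 4)) := by
  set p := √(2 * t - d)
  set q := √d
  have hq : 0 < q := sqrt_pos.mpr hd
  have hp2 : p ^ 2 = 2 * t - d := sq_sqrt (by linarith)
  have hq2 : q ^ 2 = d := sq_sqrt hd.le
  have hqp : q ≤ p := sqrt_le_sqrt (by linarith)
  have hratio : t / d ≤ exp (p / q - 1) := by
    have : t / d = (1 + (p / q) ^ 2) / 2 := by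
      field_simp
      linear_combination (2 * t - d) * hq2 - d * hp2
    exact this ▸ one_add_sq_div_two_le_exp_sub_one ((one_le_div hq).mpr hqp)
  calc exp (-(t - d) / 2) * (t / d) ^ (d / 2)
      ≤ exp (-(t - d) / 2) * exp ((p / q - 1) * (d / 2)) := by
        rw [exp_mul]
        gcongr
        exact div_nonneg (hd.le.trans ht) hd.le
    _ = exp (-((p - q) ^ 2 / 4)) := by
        rw [← exp_add, ← hq2]
        congr 1
        field_simp
        linear_combination 2 * hp2 + 2 * hq2

/-- chi-squared tail bound via Laurent–Massart, Lemma A4(b).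
Here the chi-squared distribution with `d` degrees of freedom is the Gamma distribution
with shape `d/2` and rate `1/2`.  If `t ≥ d` then
`P(Z ≥ t) ≤ exp(-(√(2t - d) - √d)²/4)`. -/
theorem chi_squared_laurent_massart_tail
    {Ω : Type*} [MeasureSpace Ω] [IsProbabilityMeasure (volume : Measure Ω)]
    (d : ℕ) (hd : 0 < d)
    (Z : Ω → ℝ)
    (hZ : Measure.map Z volume = ProbabilityTheory.gammaMeasure ((d : ℝ) / 2) (1 / 2))
    (t : ℝ) (ht : (d : ℝ) ≤ t) :
    volume {ω | t ≤ Z ω} ≤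
      ENNReal.ofReal (Real.exp (-((Real.sqrt (2 * t - d) - Real.sqrt d) ^ 2 / 4))) := by
  have hd0 : (0 : ℝ) < d := Nat.cast_pos.mpr hd
  have ht0 : 0 < t := hd0.trans_le ht
  have ha : (0 : ℝ) < d / 2 := by positivity
  have : IsProbabilityMeasure (gammaMeasure ((d : ℝ) / 2) (1 / 2)) :=
    isProbabilityMeasure_gammaMeasure ha one_half_pos
  have hZ_meas : AEMeasurable Z := .of_map_ne_zero (hZ ▸ IsProbabilityMeasure.ne_zero _)
  have hlaw : volume {ω | t ≤ Z ω} = gammaMeasure ((d : ℝ) / 2) (1 / 2) {x | t ≤ x} := by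
    rw [← hZ]
    exact (Measure.map_apply_of_aemeasurable hZ_meas measurableSet_Ici).symm
  -- the minimiser of `exp (-l * t) * (r / (r - l)) ^ a`
  set l := (t - d) / (2 * t)
  have hl0 : 0 ≤ l := div_nonneg (by linarith) (by linarith)
  have hl : l < 1 / 2 := by rw [div_lt_iff₀ (by positivity)]; linarith
  have hchernoff := measure_ge_le_exp_mul_mgf (X := id) t hl0
    (integrable_exp_mul_gammaMeasure ha one_half_pos hl)
  have hexp : -l * t = -(t - d) / 2 := by
    simp only [l]
    field_simp
  have hratio : (1 / 2) / (1 / 2 - l) = t / d := by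
    have hrl : 1 / 2 - l = d / (2 * t) := by
      simp only [l]
      field_simp
      ring
    rw [hrl]
    field_simp
  rw [mgf_id_gammaMeasure ha one_half_pos hl, hexp, hratio] at hchernoff
  rw [hlaw, ← ofReal_measureReal]
  exact ENNReal.ofReal_le_ofReal (hchernoff.trans (exp_neg_sub_div_two_mul_div_rpow_le hd0 ht))
end

section
/- Separation of signal under the sparse eigenvalue condition (equation (schur) in the proof of Lemma A2(d)): Let U be an n×p real matrix, let ξ, ξ* ⊆ {1, …, p}, and suppose λ_min(U_{ξ∪ξ*}ᵀ U_{ξ∪ξ*}) ≥ c for some c > 0 (in particular U_{ξ∪ξ*} has full column rank). Let P_ξ = U_ξ U_ξ† denote the orthogonal projection onto the column space of U_ξ. Then for every vector β supported on ξ* (i.e. β ∈ ℝ^p with β_j = 0 for j ∉ ξ*), ‖(I − P_ξ) U β‖² ≥ c · Σ_{j ∈ ξ* \ ξ} β_j². -/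
/-!
Extend any `v : ξ → ℝ` by zero to `w`. Then `Uβ - U_ξ v = U_{ξ∪ξ*} δ`, where `δ = β - w`
restricted to `ξ ∪ ξ*` (β vanishes off `ξ*`), and `δ` agrees with `β` on `ξ* \ ξ`. The
Rayleigh-quotient bound gives `‖U_{ξ∪ξ*} δ‖² ≥ λ_min ‖δ‖² ≥ c Σ_{ξ*\ξ} β_j²`. The projection
residual `(I - P_ξ) Uβ` is the case `v = (U_ξᵀU_ξ)⁻¹ U_ξᵀ Uβ`.
-/

open MeasureTheory Matrix

lemma sum_mul_gram_mul_eq_sum_mulVec_sq {k m : Type*} [Fintype k] [Fintype m]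
    (M : Matrix m k ℝ) (x : k → ℝ) :
    ∑ i, ∑ j, x i * (Mᵀ * M) i j * x j = ∑ l, (M *ᵥ x) l ^ 2 := by
  have hquad : ∑ i, ∑ j, x i * (Mᵀ * M) i j * x j = x ⬝ᵥ ((Mᵀ * M) *ᵥ x) := by
    simp only [dotProduct, mulVec, Finset.mul_sum, mul_assoc]
  rw [hquad, ← mulVec_mulVec, dotProduct_mulVec, vecMul_transpose]
  simp only [dotProduct, sq]

lemma bddBelow_quadForm_on_unit_sphere {k : Type*} [Fintype k] (A : Matrix k k ℝ) :
    BddBelow (Set.range fun x : {x : k → ℝ // ∑ i, x i ^ 2 = 1} =>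
      ∑ i, ∑ j, x.1 i * A i j * x.1 j) := by
  refine ⟨-∑ i, ∑ j, |A i j|, ?_⟩
  rintro _ ⟨⟨x, hx⟩, rfl⟩
  have hle : ∀ i, |x i| ≤ 1 := fun i => by
    rw [← sq_le_one_iff_abs_le_one, ← hx]
    exact Finset.single_le_sum (fun j _ => sq_nonneg (x j)) (Finset.mem_univ i)
  rw [← Finset.sum_neg_distrib]
  refine Finset.sum_le_sum fun i _ => ?_
  rw [← Finset.sum_neg_distrib]
  refine Finset.sum_le_sum fun j _ => ?_
  have : |x i * A i j * x j| ≤ |A i j| := by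
    rw [abs_mul, abs_mul]
    calc |x i| * |A i j| * |x j| ≤ 1 * |A i j| * 1 := by gcongr <;> exact hle _
      _ = |A i j| := by ring
  exact neg_le_of_abs_le this

lemma lambdaMin_mul_sum_sq_le {k : Type*} [Fintype k] (A : Matrix k k ℝ) (x : k → ℝ) :
    lambdaMin A * ∑ i, x i ^ 2 ≤ ∑ i, ∑ j, x i * A i j * x j := by
  obtain hs | hs := (Finset.sum_nonneg fun i _ => sq_nonneg (x i) : 0 ≤ ∑ i, x i ^ 2).eq_or_lt
  · have hx : x = 0 := funext fun i =>
      pow_eq_zero_iff two_ne_zero |>.1 <|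
        (Finset.sum_eq_zero_iff_of_nonneg fun j _ => sq_nonneg (x j)).1 hs.symm i
          (Finset.mem_univ i)
    simp [hx]
  -- Apply the infimum to the unit vector `x / √s`, on which the quadratic form is divided by `s`.
  set s := ∑ i, x i ^ 2
  set t := Real.sqrt s
  have ht : t ^ 2 = s := Real.sq_sqrt hs.le
  have hunit : ∑ i, (x i / t) ^ 2 = 1 := by
    rw [← div_self hs.ne']
    simp only [div_pow, ht, ← Finset.sum_div, s]
  have hscale : ∑ i, ∑ j, x i / t * A i j * (x j / t) = (∑ i, ∑ j, x i * A i j * x j) / s := by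
    simp only [Finset.sum_div, ← ht]
    refine Finset.sum_congr rfl fun i _ => Finset.sum_congr rfl fun j _ => ?_
    field_simp
  rw [← le_div_iff₀ hs]
  exact (ciInf_le (bddBelow_quadForm_on_unit_sphere A) ⟨fun i => x i / t, hunit⟩).trans_eq hscale

lemma colSub_mulVec_of_forall_notMem_eq_zero {n p : ℕ} (U : Matrix (Fin n) (Fin p) ℝ)
    {s : Finset (Fin p)} {w : Fin p → ℝ} (hw : ∀ j ∉ s, w j = 0) :
    colSub U s *ᵥ (fun j => w j) = U *ᵥ w := by
  ext i
  simp only [mulVec, dotProduct, colSub, of_apply]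
  rw [Finset.sum_coe_sort s fun j => U i j * w j]
  exact Finset.sum_subset (Finset.subset_univ s) fun j _ hj => by rw [hw j hj, mul_zero]

lemma mul_sum_sq_sdiff_le_sum_sq_sub_colSub_mulVec {n p : ℕ} (U : Matrix (Fin n) (Fin p) ℝ)
    {ξ ξstar : Finset (Fin p)} {c : ℝ} (hc : 0 ≤ c)
    (hmin : c ≤ lambdaMin ((colSub U (ξ ∪ ξstar))ᵀ * colSub U (ξ ∪ ξstar)))
    {β : Fin p → ℝ} (hβ : ∀ j ∉ ξstar, β j = 0) (v : {j : Fin p // j ∈ ξ} → ℝ) :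
    c * ∑ j ∈ ξstar \ ξ, β j ^ 2 ≤ ∑ i, (U *ᵥ β - colSub U ξ *ᵥ v) i ^ 2 := by
  set w : Fin p → ℝ := fun j => if h : j ∈ ξ then v ⟨j, h⟩ else 0
  have hw : colSub U ξ *ᵥ v = U *ᵥ w := by
    rw [← colSub_mulVec_of_forall_notMem_eq_zero U fun j hj => dif_neg hj]
    congr
    funext j
    simp
  have hres : U *ᵥ β - colSub U ξ *ᵥ v = colSub U (ξ ∪ ξstar) *ᵥ fun j => (β - w) j.1 := by
    rw [hw, ← mulVec_sub, colSub_mulVec_of_forall_notMem_eq_zero]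
    intro j hj
    rw [Finset.mem_union, not_or] at hj
    simp [w, hβ j hj.2, hj.1]
  rw [hres, ← sum_mul_gram_mul_eq_sum_mulVec_sq]
  refine le_trans ?_ (lambdaMin_mul_sum_sq_le _ _)
  calc c * ∑ j ∈ ξstar \ ξ, β j ^ 2 = c * ∑ j ∈ ξstar \ ξ, (β - w) j ^ 2 := by
        refine congrArg (c * ·) (Finset.sum_congr rfl fun j hj => ?_)
        simp [w, (Finset.mem_sdiff.1 hj).2]
    _ ≤ c * ∑ j ∈ ξ ∪ ξstar, (β - w) j ^ 2 := by
        gcongr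
        exact Finset.sdiff_subset.trans Finset.subset_union_right
    _ = c * ∑ j : {j // j ∈ ξ ∪ ξstar}, (β - w) j.1 ^ 2 := by
        rw [← Finset.sum_coe_sort (ξ ∪ ξstar)]
    _ ≤ _ := by gcongr

/-- separation of signal under the sparse eigenvalue condition.
If `λ_min(U_{ξ∪ξ*}ᵀ U_{ξ∪ξ*}) ≥ c > 0` and `P_ξ = U_ξ (U_ξᵀU_ξ)⁻¹ U_ξᵀ` is the
orthogonal projection onto the column space of `U_ξ`, then for every `β` supported on
`ξ*`, `‖(I - P_ξ) U β‖² ≥ c ⬝ ∑_{j ∈ ξ* \ ξ} β_j²`. -/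
theorem signal_separation_sparse_eigenvalue
    (n p : ℕ) (U : Matrix (Fin n) (Fin p) ℝ) (ξ ξstar : Finset (Fin p))
    (c : ℝ) (hc : 0 < c)
    (hmin : c ≤ lambdaMin ((colSub U (ξ ∪ ξstar))ᵀ * colSub U (ξ ∪ ξstar)))
    (β : Fin p → ℝ) (hβ : ∀ j ∉ ξstar, β j = 0) :
    c * ∑ j ∈ ξstar \ ξ, β j ^ 2 ≤
      ∑ i, (((1 - colSub U ξ * ((colSub U ξ)ᵀ * colSub U ξ)⁻¹ * (colSub U ξ)ᵀ) *ᵥ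
        (U *ᵥ β)) i) ^ 2 := by
  rw [sub_mulVec, one_mulVec, Matrix.mul_assoc, ← mulVec_mulVec]
  exact mul_sum_sq_sdiff_le_sum_sq_sub_colSub_mulVec U hc.le hmin hβ _
end

section
/- Orthogonal-alignment (Procrustes) bound from the proof of Lemma B3: Let F̂ and F̃ be n×k real matrices with F̂ᵀF̂ = n·I_k and F̃ᵀF̃ = n·I_k. Then there exist k×k real orthogonal matrices O₁ and O₂ such that ‖F̂O₁ − F̃O₂‖_F² ≤ n·(2k − 2‖F̂ᵀF̃/n‖_F²). -/
open MeasureTheory Matrix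

/-! With `A = F̂ᵀF̃`, for orthogonal `O₁, O₂` one has `‖F̂O₁ - F̃O₂‖_F² = 2nk - 2 tr(O₁ᵀAO₂)`,
and Cauchy–Schwarz bounds the operator norm of `A` by `n`. Choosing `O₂` as an orthonormal
eigenbasis of `AᵀA` makes the columns of `AO₂` orthogonal, with squared lengths the eigenvalues
`λᵢ ≤ n²`; normalising the nonzero columns and completing them to an orthonormal basis `O₁` gives
`tr(O₁ᵀAO₂) = ∑ √λᵢ ≥ ∑ λᵢ / n = ‖A‖_F² / n`. -/

theorem frobNorm_sq_eq_trace {m ι : Type*} [Fintype m] [Fintype ι] (A : Matrix m ι ℝ) :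
    frobNorm A ^ 2 = (Aᵀ * A).trace := by
  rw [frobNorm, Real.sq_sqrt (by positivity), trace, Finset.sum_comm]
  simp [mul_apply, sq]

namespace Matrix

variable {m ι : Type*} [Fintype m] [Fintype ι] [DecidableEq ι]

theorem mulVec_dotProduct_mulVec_self {F : Matrix m ι ℝ} {c : ℝ}
    (hF : Fᵀ * F = c • 1) (v : ι → ℝ) : (F *ᵥ v) ⬝ᵥ (F *ᵥ v) = c * (v ⬝ᵥ v) := by
  rw [dotProduct_mulVec, ← mulVec_transpose, mulVec_mulVec, hF, smul_mulVec, one_mulVec,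
    smul_dotProduct, smul_eq_mul]

theorem transpose_mul_mulVec_dotProduct_self_le {F G : Matrix m ι ℝ} {c : ℝ}
    (hF : Fᵀ * F = c • 1) (hG : Gᵀ * G = c • 1) (v : ι → ℝ) :
    ((Fᵀ * G) *ᵥ v) ⬝ᵥ ((Fᵀ * G) *ᵥ v) ≤ c ^ 2 * (v ⬝ᵥ v) := by
  set z := (Fᵀ * G) *ᵥ v
  have hz : z ⬝ᵥ z = (F *ᵥ z) ⬝ᵥ (G *ᵥ v) := by
    rw [← vecMul_transpose, ← dotProduct_mulVec, mulVec_mulVec]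
  have cauchy_schwarz : ((F *ᵥ z) ⬝ᵥ (G *ᵥ v)) ^ 2 ≤
      ((F *ᵥ z) ⬝ᵥ (F *ᵥ z)) * ((G *ᵥ v) ⬝ᵥ (G *ᵥ v)) := by
    simpa [dotProduct, sq] using Finset.sum_mul_sq_le_sq_mul_sq Finset.univ (F *ᵥ z) (G *ᵥ v)
  rw [← hz, mulVec_dotProduct_mulVec_self hF, mulVec_dotProduct_mulVec_self hG] at cauchy_schwarz
  have hzz : 0 ≤ z ⬝ᵥ z := Finset.sum_nonneg fun _ _ => mul_self_nonneg _
  have hvv : 0 ≤ v ⬝ᵥ v := Finset.sum_nonneg fun _ _ => mul_self_nonneg _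
  rcases hzz.eq_or_lt with h | h
  · rw [← h]; positivity
  · nlinarith

theorem transpose_mul_self_mul_eq_smul {F : Matrix m ι ℝ} {U : Matrix ι ι ℝ}
    {c : ℝ} (hF : Fᵀ * F = c • 1) (hU : Uᵀ * U = 1) : (F * U)ᵀ * (F * U) = c • 1 := by
  rw [transpose_mul, Matrix.mul_assoc, ← Matrix.mul_assoc Fᵀ, hF, Matrix.smul_mul, Matrix.one_mul,
    Matrix.mul_smul, hU]

theorem exists_orthogonal_trace_transpose_mul_eq_sum_sqrt (B : Matrix ι ι ℝ) (d : ι → ℝ)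
    (hB : Bᵀ * B = diagonal d) :
    ∃ U : Matrix ι ι ℝ, Uᵀ * U = 1 ∧ (Uᵀ * B).trace = ∑ i, √(d i) := by
  let col (i : ι) : EuclideanSpace ℝ ι := WithLp.toLp 2 (Bᵀ i)
  have inner_col (i j : ι) : inner ℝ (col i) (col j) = diagonal d i j := by
    rw [← hB, EuclideanSpace.inner_eq_star_dotProduct, mul_apply, dotProduct_comm]
    rfl
  have d_nonneg (i : ι) : 0 ≤ d i := by
    have := real_inner_self_nonneg (x := col i)
    rwa [inner_col, diagonal_apply_eq] at this
  let s : Set ι := {i | d i ≠ 0}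
  have normalized : Orthonormal ℝ (s.domRestrict fun i => (√(d i))⁻¹ • col i) := by
    rw [orthonormal_iff_ite]
    rintro ⟨i, hi⟩ ⟨j, hj⟩
    simp only [Set.domRestrict_apply, inner_smul_left, inner_smul_right, inner_col, diagonal_apply,
      Subtype.mk.injEq]
    split_ifs with hij
    · subst hij
      rw [conj_trivial, ← mul_assoc, ← mul_inv, Real.mul_self_sqrt (d_nonneg i), inv_mul_cancel₀ hi]
    · simp
  obtain ⟨e, he⟩ := normalized.exists_orthonormalBasis_extension_of_card_eq (by simp)
  let U := (EuclideanSpace.basisFun ι ℝ).toBasis.toMatrix e.toBasis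
  refine ⟨U, (mem_orthogonalGroup_iff' ι ℝ).1
    ((EuclideanSpace.basisFun ι ℝ).toMatrix_orthonormalBasis_mem_orthogonal e), ?_⟩
  have diag_eq (i : ι) : (Uᵀ * B) i i = inner ℝ (e i) (col i) := by
    rw [EuclideanSpace.inner_eq_star_dotProduct, mul_apply, dotProduct_comm]
    simp [U, col, dotProduct, Module.Basis.toMatrix_apply]
  refine Finset.sum_congr rfl fun i _ => ?_
  rw [diag_apply, diag_eq]
  by_cases hi : d i = 0
  · have : col i = 0 := by rw [← inner_self_eq_zero (𝕜 := ℝ), inner_col, diagonal_apply_eq, hi]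
    rw [this, hi, inner_zero_right, Real.sqrt_zero]
  · rw [he i hi, inner_smul_left, inner_col, diagonal_apply_eq, conj_trivial, ← div_eq_inv_mul,
      Real.div_sqrt]

theorem exists_orthogonal_trace_transpose_mul_self_le_mul_trace {A : Matrix ι ι ℝ} {c : ℝ}
    (hc : 0 ≤ c) (hA : ∀ v, (A *ᵥ v) ⬝ᵥ (A *ᵥ v) ≤ c ^ 2 * (v ⬝ᵥ v)) :
    ∃ U V : Matrix ι ι ℝ, Uᵀ * U = 1 ∧ Vᵀ * V = 1 ∧ (Aᵀ * A).trace ≤ c * (Uᵀ * A * V).trace := by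
  have hS : (Aᵀ * A).IsHermitian := by
    simpa [conjTranspose_eq_transpose_of_trivial] using isHermitian_conjTranspose_mul_self A
  let V : Matrix ι ι ℝ := hS.eigenvectorUnitary
  have hV : Vᵀ * V = 1 := by
    simpa [star_eq_conjTranspose] using Unitary.coe_star_mul_self hS.eigenvectorUnitary
  have hdiag : (A * V)ᵀ * (A * V) = diagonal hS.eigenvalues := by
    have := hS.conjStarAlgAut_star_eigenvectorUnitary
    rw [Unitary.conjStarAlgAut_star_apply, star_eq_conjTranspose,
      conjTranspose_eq_transpose_of_trivial] at this
    rw [transpose_mul, Matrix.mul_assoc, ← Matrix.mul_assoc Aᵀ, ← Matrix.mul_assoc, this,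
      RCLike.ofReal_real_eq_id, Function.id_comp]
  obtain ⟨U, hU, htrace⟩ := exists_orthogonal_trace_transpose_mul_eq_sum_sqrt _ _ hdiag
  refine ⟨U, V, hU, hV, ?_⟩
  have eigenvalue_eq (i : ι) : hS.eigenvalues i = (A *ᵥ Vᵀ i) ⬝ᵥ (A *ᵥ Vᵀ i) := by
    have := congrFun (congrFun hdiag i) i
    rw [diagonal_apply_eq] at this
    rw [← this, mul_apply]
    simp [mulVec, dotProduct, mul_apply]
  have eigenvalue_le (i : ι) : hS.eigenvalues i ≤ c * √(hS.eigenvalues i) := by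
    have hunit : Vᵀ i ⬝ᵥ Vᵀ i = 1 := by
      simpa [mul_apply, dotProduct] using congrFun (congrFun hV i) i
    have h0 : 0 ≤ hS.eigenvalues i := by
      rw [eigenvalue_eq]; exact Finset.sum_nonneg fun _ _ => mul_self_nonneg _
    have h1 : √(hS.eigenvalues i) ≤ c := by
      rw [Real.sqrt_le_iff, eigenvalue_eq]
      simpa [hunit, hc] using hA (Vᵀ i)
    calc hS.eigenvalues i = √(hS.eigenvalues i) * √(hS.eigenvalues i) :=
          (Real.mul_self_sqrt h0).symm
      _ ≤ c * √(hS.eigenvalues i) := by gcongr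
  calc (Aᵀ * A).trace = ∑ i, hS.eigenvalues i := hS.trace_eq_sum_eigenvalues
    _ ≤ ∑ i, c * √(hS.eigenvalues i) := Finset.sum_le_sum fun i _ => eigenvalue_le i
    _ = c * (Uᵀ * A * V).trace := by rw [← Finset.mul_sum, ← htrace, Matrix.mul_assoc]

end Matrix

theorem frobNorm_mul_sub_mul_sq {m ι : Type*} [Fintype m] [Fintype ι] [DecidableEq ι]
    {F G : Matrix m ι ℝ} {U V : Matrix ι ι ℝ} {c : ℝ}
    (hF : Fᵀ * F = c • 1) (hG : Gᵀ * G = c • 1) (hU : Uᵀ * U = 1) (hV : Vᵀ * V = 1) :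
    frobNorm (F * U - G * V) ^ 2 = 2 * c * Fintype.card ι - 2 * (Uᵀ * (Fᵀ * G) * V).trace := by
  have cross : ((F * U)ᵀ * (G * V)).trace = (Uᵀ * (Fᵀ * G) * V).trace := by
    simp only [transpose_mul, Matrix.mul_assoc]
  rw [frobNorm_sq_eq_trace, transpose_sub, Matrix.sub_mul, Matrix.mul_sub, Matrix.mul_sub,
    transpose_mul_self_mul_eq_smul hF hU, transpose_mul_self_mul_eq_smul hG hV, trace_sub,
    trace_sub, trace_sub, ← trace_transpose ((G * V)ᵀ * (F * U)), transpose_mul (G * V)ᵀ,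
    transpose_transpose, cross, trace_smul, trace_one, smul_eq_mul]
  ring

/-- orthogonal-alignment / Procrustes bound from the proof of Lemma B3.
If `F̂ᵀF̂ = n I_k` and `F̃ᵀF̃ = n I_k`, then there exist `k × k` orthogonal matrices
`O₁, O₂` with `‖F̂O₁ - F̃O₂‖_F² ≤ n (2k - 2 ‖F̂ᵀF̃/n‖_F²)`. -/
theorem procrustes_alignment_bound
    (n k : ℕ) (hn : 0 < n)
    (Fhat Ftilde : Matrix (Fin n) (Fin k) ℝ)
    (hFhat : Fhatᵀ * Fhat = (n : ℝ) • (1 : Matrix (Fin k) (Fin k) ℝ))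
    (hFtilde : Ftildeᵀ * Ftilde = (n : ℝ) • (1 : Matrix (Fin k) (Fin k) ℝ)) :
    ∃ O₁ O₂ : Matrix (Fin k) (Fin k) ℝ,
      O₁ᵀ * O₁ = 1 ∧ O₂ᵀ * O₂ = 1 ∧
      frobNorm (Fhat * O₁ - Ftilde * O₂) ^ 2 ≤
        (n : ℝ) * (2 * k - 2 * frobNorm (((n : ℝ)⁻¹) • (Fhatᵀ * Ftilde)) ^ 2) := by
  obtain ⟨U, V, hU, hV, hle⟩ := exists_orthogonal_trace_transpose_mul_self_le_mul_trace
    (Nat.cast_nonneg n) (transpose_mul_mulVec_dotProduct_self_le hFhat hFtilde)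
  refine ⟨U, V, hU, hV, ?_⟩
  set A := Fhatᵀ * Ftilde
  have hn' : (0 : ℝ) < n := by exact_mod_cast hn
  have trace_div_le :
      (n : ℝ) * ((n : ℝ)⁻¹ * ((n : ℝ)⁻¹ * (Aᵀ * A).trace)) ≤ (Uᵀ * A * V).trace := by
    rw [← mul_assoc, mul_inv_cancel₀ hn'.ne', one_mul, inv_mul_le_iff₀ hn']
    exact hle
  rw [frobNorm_mul_sub_mul_sq hFhat hFtilde hU hV, frobNorm_sq_eq_trace, transpose_smul,
    Matrix.smul_mul, Matrix.mul_smul, trace_smul, trace_smul, smul_eq_mul, smul_eq_mul,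
    Fintype.card_fin]
  linarith
end
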